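/- arXiv:1805.01726 — 2 statements merged into one kernel-verified Lean document; each statement's English description precedes it below -/
import Mathlib

section
/- Let t₁, t₂ be positive integers and n ≥ 0, k ≥ 1 integers. Let F_n = (P,Q) be a quasi-homogeneous polynomial vector field of type t = (t₁,t₂) and degree n over ℂ which is irreducible, i.e. P and Q have no nonconstant common factor. Let f ∈ ℂ[x,y] be an irreducible polynomial with f(0,0) = 0 which is an invariant curve of F_n (∇f·F_n = K·f for some polynomial K). If p ∈ ℂ[x,y] is quasi-homogeneous of type t and degree k ≥ 1 and f divides ∇p·F_n, then f divides p. -/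
/-!
Since `f` is invariant and divides `∇p·F`, it divides `f_y ∇p·F − p_y ∇f·F = P {p, f}` and
`p_x ∇f·F − f_x ∇p·F = Q {p, f}`, where `{p, f} = f_y p_x − f_x p_y`; as `P` and `Q` have no
common factor, the prime `f` divides `{p, f}`. Thus `p` is a first integral, on the curve
`f = 0`, of the Hamiltonian derivation `D = {·, f}`, and must be constant there.

Concretely, swap the variables so that `f_y ≠ 0`. The ring `ℂ[x][y]/(f)` is generated over
`ℂ[x]` by one algebraic element, so `∑ bᵢ(x) pⁱ ≡ 0 mod f` for some `bᵢ ∈ ℂ[x]` not all zero.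
`D` preserves `(f)`, kills `p` modulo `f` and sends `x` to `f_y`, so applying it gives
`f_y ∑ bᵢ'(x) pⁱ ≡ 0`, and `f ∤ f_y` for degree reasons. Iterating until the `bᵢ` are constants
gives `f ∣ u(p)` for a nonzero `u ∈ ℂ[T]`, hence `f ∣ p − c` for a root `c` of `u`.
Quasi-homogeneity of positive degree gives `p(0,0) = 0 = f(0,0)`, so `c = 0`.
-/

open MvPolynomial

/-- A polynomial in two variables is quasi-homogeneous of type `(t₁,t₂)` and
degree `k` if every monomial `x^a y^b` occurring in it satisfies `t₁a + t₂b = k`. -/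
def IsQH (t₁ t₂ k : ℕ) (p : MvPolynomial (Fin 2) ℂ) : Prop :=
  ∀ m ∈ p.support, t₁ * m 0 + t₂ * m 1 = k

/-- `∇f · (P,Q)` for a planar polynomial vector field `(P,Q)`. -/
noncomputable def gradDot (f P Q : MvPolynomial (Fin 2) ℂ) : MvPolynomial (Fin 2) ℂ :=
  pderiv 0 f * P + pderiv 1 f * Q

section Derivation

variable {R A : Type*} [CommSemiring R] [CommRing A] [Algebra R A]

theorem Derivation.dvd_sum_apply_mul_pow (D : Derivation R A A) {f p : A} (hf : f ∣ D f)
    (hp : f ∣ D p) (s : Finset ℕ) (a : ℕ → A) (h : f ∣ ∑ i ∈ s, a i * p ^ i) :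
    f ∣ ∑ i ∈ s, D (a i) * p ^ i := by
  obtain ⟨q, hq⟩ := h
  have hD : D (∑ i ∈ s, a i * p ^ i) =
      ∑ i ∈ s, D (a i) * p ^ i + (∑ i ∈ s, a i * (i * p ^ (i - 1))) * D p := by
    simp only [map_sum, Derivation.leibniz, Derivation.leibniz_pow, Finset.sum_mul,
      ← Finset.sum_add_distrib, smul_eq_mul, nsmul_eq_mul]
    exact Finset.sum_congr rfl fun i _ => by ring
  have hfD : f ∣ D (∑ i ∈ s, a i * p ^ i) := by
    rw [hq, Derivation.leibniz, smul_eq_mul, smul_eq_mul]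
    exact dvd_add (dvd_mul_right _ _) (dvd_mul_of_dvd_right hf _)
  rw [hD] at hfD
  exact (dvd_add_left (dvd_mul_of_dvd_right hp _)).mp hfD

open Polynomial in
theorem Derivation.dvd_sum_aeval_iterate_derivative_mul_pow (D : Derivation R A A) {f p x : A}
    (hprime : Prime f) (hf : f ∣ D f) (hp : f ∣ D p) (hx : ¬f ∣ D x) (s : Finset ℕ)
    (b : ℕ → R[X]) (h : f ∣ ∑ i ∈ s, aeval x (b i) * p ^ i) (d : ℕ) :
    f ∣ ∑ i ∈ s, aeval x (derivative^[d] (b i)) * p ^ i := by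
  induction d with
  | zero => simpa using h
  | succ d ih =>
    have hstep := D.dvd_sum_apply_mul_pow hf hp s _ ih
    simp only [Derivation.map_aeval, smul_eq_mul, mul_right_comm _ (D x), ← Finset.sum_mul]
      at hstep
    simpa only [Function.iterate_succ_apply'] using (hprime.dvd_or_dvd hstep).resolve_right hx

end Derivation

namespace Polynomial

theorem exists_iterate_derivative_eq_C {R : Type*} [CommRing R] [IsDomain R] [CharZero R]
    (s : Finset ℕ) (b : ℕ → R[X]) (hb : ∃ i ∈ s, b i ≠ 0) :
    ∃ (d : ℕ) (c : ℕ → R), (∀ i ∈ s, derivative^[d] (b i) = C (c i)) ∧ ∃ i ∈ s, c i ≠ 0 := by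
  classical
  obtain ⟨i₀, hi₀, hmax⟩ := (s.filter (b · ≠ 0)).exists_max_image (natDegree ∘ b)
    (by simpa [Finset.filter_nonempty_iff] using hb)
  rw [Finset.mem_filter] at hi₀
  have hle : ∀ i ∈ s, (b i).natDegree ≤ (b i₀).natDegree := fun i hi => by
    by_cases hbi : b i = 0
    · simp [hbi]
    · exact hmax i (Finset.mem_filter.mpr ⟨hi, hbi⟩)
  refine ⟨(b i₀).natDegree, fun i => (derivative^[(b i₀).natDegree] (b i)).coeff 0,
    fun i hi => eq_C_of_natDegree_eq_zero ?_, i₀, hi₀.1, ?_⟩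
  · have := natDegree_iterate_derivative (b i) (b i₀).natDegree
    have := hle i hi
    omega
  · dsimp only
    rw [coeff_iterate_derivative, zero_add, Nat.descFactorial_self, ← leadingCoeff]
    exact smul_ne_zero (Nat.factorial_ne_zero _) (leadingCoeff_ne_zero.mpr hi₀.2)

theorem exists_ne_zero_dvd_aeval {A : Type*} [CommRing A] [IsDomain A] {F : A[X]} (hF : F ≠ 0)
    (P : A[X]) : ∃ G : A[X], G ≠ 0 ∧ F ∣ aeval P G := by
  have halg : IsAlgebraic A (AdjoinRoot.mk F P) :=
    Algebra.isAlgebraic_adjoin_singleton_iff.mpr (AdjoinRoot.isAlgebraic_root hF) _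
      (by rw [AdjoinRoot.adjoinRoot_eq_top]; exact Algebra.mem_top)
  obtain ⟨G, hG, hroot⟩ := halg
  refine ⟨G, hG, AdjoinRoot.mk_eq_zero.mp ?_⟩
  rwa [← AdjoinRoot.aeval_eq, ← aeval_algHom_apply, AdjoinRoot.aeval_eq]

theorem Bivariate.equivMvPolynomial_C {R : Type*} [CommSemiring R] (a : R[X]) :
    Bivariate.equivMvPolynomial R (C a) = aeval (MvPolynomial.X 0) a := by
  induction a using Polynomial.induction_on with
  | C r => simp
  | add p q hp hq => simp [hp, hq]
  | monomial n r _ => simp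

end Polynomial

open Polynomial in
theorem Prime.exists_dvd_sub_algebraMap_of_dvd_aeval {K A : Type*} [Field K] [IsAlgClosed K]
    [CommRing A] [Algebra K A] {f : A} (hf : Prime f) {u : K[X]} (hu : u ≠ 0) {p : A}
    (h : f ∣ aeval p u) : ∃ c : K, f ∣ p - algebraMap K A c := by
  rw [(IsAlgClosed.splits u).eq_prod_roots, map_mul, Polynomial.aeval_C, map_multiset_prod,
    Multiset.map_map] at h
  have hlc : ¬f ∣ algebraMap K A u.leadingCoeff :=
    fun hdvd => hf.not_isUnit (isUnit_of_dvd_unit hdvd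
      ((leadingCoeff_ne_zero.mpr hu).isUnit.map _))
  obtain ⟨c, -, hc⟩ := hf.exists_mem_multiset_map_dvd ((hf.dvd_or_dvd h).resolve_left hlc)
  exact ⟨c, by simpa using hc⟩

section Bivariate

open scoped Polynomial
open Polynomial.Bivariate

variable {K : Type*} [Field K]

noncomputable def hamiltonian (f : MvPolynomial (Fin 2) K) :
    Derivation K (MvPolynomial (Fin 2) K) (MvPolynomial (Fin 2) K) :=
  pderiv 1 f • pderiv 0 - pderiv 0 f • pderiv 1

theorem hamiltonian_apply (f g : MvPolynomial (Fin 2) K) :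
    hamiltonian f g = pderiv 1 f * pderiv 0 g - pderiv 0 f * pderiv 1 g :=
  rfl

theorem hamiltonian_self (f : MvPolynomial (Fin 2) K) : hamiltonian f f = 0 := by
  rw [hamiltonian_apply, mul_comm, sub_self]

theorem hamiltonian_X_zero (f : MvPolynomial (Fin 2) K) : hamiltonian f (X 0) = pderiv 1 f := by
  simp [hamiltonian_apply, pderiv_X]

theorem not_dvd_pderiv_one {f : MvPolynomial (Fin 2) K} (hf : pderiv 1 f ≠ 0) :
    ¬f ∣ pderiv 1 f := by
  obtain ⟨F, rfl⟩ := (equivMvPolynomial K).surjective f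
  rw [pderiv_one_equivMvPolynomial, map_ne_zero_iff _ (equivMvPolynomial K).injective] at hf
  rw [pderiv_one_equivMvPolynomial, map_dvd_iff]
  intro hdvd
  exact (Polynomial.natDegree_derivative_lt fun h =>
    hf (Polynomial.derivative_of_natDegree_zero h)).not_ge (Polynomial.natDegree_le_of_dvd hdvd hf)

theorem exists_eq_C_of_pderiv_eq_zero [CharZero K] {f : MvPolynomial (Fin 2) K}
    (h₀ : pderiv 0 f = 0) (h₁ : pderiv 1 f = 0) : ∃ c : K, f = C c := by
  obtain ⟨F, rfl⟩ := (equivMvPolynomial K).surjective f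
  rw [pderiv_one_equivMvPolynomial, map_eq_zero_iff _ (equivMvPolynomial K).injective] at h₁
  rw [Polynomial.eq_C_of_derivative_eq_zero h₁, equivMvPolynomial_C] at h₀ ⊢
  rw [Derivation.map_aeval, pderiv_X_self, smul_eq_mul, mul_one, ← equivMvPolynomial_C,
    map_eq_zero_iff _ (equivMvPolynomial K).injective, Polynomial.C_eq_zero] at h₀
  rw [Polynomial.eq_C_of_derivative_eq_zero h₀]
  exact ⟨_, Polynomial.aeval_C _ _⟩

theorem exists_dvd_sum_aeval_X_zero_mul_pow {f : MvPolynomial (Fin 2) K} (hf : f ≠ 0)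
    (p : MvPolynomial (Fin 2) K) : ∃ (N : ℕ) (b : ℕ → K[X]),
      (∃ i ∈ Finset.range N, b i ≠ 0) ∧
        f ∣ ∑ i ∈ Finset.range N, Polynomial.aeval (X 0) (b i) * p ^ i := by
  obtain ⟨G, hG, hdvd⟩ := Polynomial.exists_ne_zero_dvd_aeval
    ((map_ne_zero_iff _ (equivMvPolynomial K).symm.injective).mpr hf) ((equivMvPolynomial K).symm p)
  refine ⟨G.natDegree + 1, G.coeff, ⟨G.natDegree, by simp, by simpa using hG⟩, ?_⟩
  have := map_dvd (equivMvPolynomial K) hdvd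
  rw [AlgEquiv.apply_symm_apply, Polynomial.aeval_eq_sum_range, map_sum] at this
  simpa [Polynomial.smul_eq_C_mul, equivMvPolynomial_C] using this

theorem exists_dvd_sub_C_of_pderiv_one_ne_zero [CharZero K] [IsAlgClosed K]
    {f p : MvPolynomial (Fin 2) K} (hf : Prime f) (hf₁ : pderiv 1 f ≠ 0)
    (h : f ∣ hamiltonian f p) : ∃ c : K, f ∣ p - C c := by
  obtain ⟨N, b, hb, hrel⟩ := exists_dvd_sum_aeval_X_zero_mul_pow hf.ne_zero p
  obtain ⟨d, c, hc, i, hi, hci⟩ := Polynomial.exists_iterate_derivative_eq_C _ b hb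
  have hconst := (hamiltonian f).dvd_sum_aeval_iterate_derivative_mul_pow hf
    (by simp [hamiltonian_self]) h (by rw [hamiltonian_X_zero]; exact not_dvd_pderiv_one hf₁)
    _ b hrel d
  set u : K[X] := ∑ i ∈ Finset.range N, Polynomial.C (c i) * Polynomial.X ^ i
  have hu : u ≠ 0 := fun hu => hci (by
    simpa [u, Polynomial.finsetSum_coeff, Polynomial.coeff_C_mul_X_pow, hi] using
      congrArg (Polynomial.coeff · i) hu)
  refine hf.exists_dvd_sub_algebraMap_of_dvd_aeval hu ?_
  convert hconst using 1
  simp only [u, map_sum, map_mul, map_pow, Polynomial.aeval_C, Polynomial.aeval_X]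
  exact Finset.sum_congr rfl fun i hi => by rw [hc i hi, Polynomial.aeval_C]

theorem pderiv_zero_rename_swap (g : MvPolynomial (Fin 2) K) :
    pderiv 0 (rename (Equiv.swap 0 1) g) = rename (Equiv.swap 0 1) (pderiv 1 g) := by
  simpa using pderiv_rename (Equiv.swap (0 : Fin 2) 1).injective 1 g

theorem pderiv_one_rename_swap (g : MvPolynomial (Fin 2) K) :
    pderiv 1 (rename (Equiv.swap 0 1) g) = rename (Equiv.swap 0 1) (pderiv 0 g) := by
  simpa using pderiv_rename (Equiv.swap (0 : Fin 2) 1).injective 0 g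

theorem hamiltonian_rename_swap (f g : MvPolynomial (Fin 2) K) :
    hamiltonian (rename (Equiv.swap 0 1) f) (rename (Equiv.swap 0 1) g) =
      -rename (Equiv.swap 0 1) (hamiltonian f g) := by
  simp only [hamiltonian_apply, pderiv_zero_rename_swap, pderiv_one_rename_swap, map_sub,
    map_mul]
  ring

theorem exists_dvd_sub_C_of_dvd_hamiltonian [CharZero K] [IsAlgClosed K]
    {f p : MvPolynomial (Fin 2) K} (hf : Prime f) (h : f ∣ hamiltonian f p) :
    ∃ c : K, f ∣ p - C c := by
  by_cases hf₁ : pderiv 1 f = 0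
  swap
  · exact exists_dvd_sub_C_of_pderiv_one_ne_zero hf hf₁ h
  by_cases hf₀ : pderiv 0 f = 0
  · obtain ⟨c, rfl⟩ := exists_eq_C_of_pderiv_eq_zero hf₀ hf₁
    have hc : c ≠ 0 := by rintro rfl; exact hf.ne_zero (map_zero C)
    exact absurd ((isUnit_iff_ne_zero.mpr hc).map C) hf.not_isUnit
  set σ := renameEquiv K (Equiv.swap (0 : Fin 2) 1)
  obtain ⟨c, hc⟩ := exists_dvd_sub_C_of_pderiv_one_ne_zero (p := σ p)
    ((MulEquiv.prime_iff σ).mpr hf)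
    (by rw [show σ f = rename _ f from rfl, pderiv_one_rename_swap]
        exact (map_ne_zero_iff _ σ.injective).mpr hf₀)
    (by simpa [σ, hamiltonian_rename_swap] using map_dvd σ h)
  refine ⟨c, ?_⟩
  simpa only [map_sub, AlgEquiv.symm_apply_apply, ← algebraMap_eq, AlgEquiv.commutes] using
    map_dvd σ.symm hc

end Bivariate

theorem mul_hamiltonian_eq_fst (f p P Q : MvPolynomial (Fin 2) ℂ) :
    P * hamiltonian f p = pderiv 1 f * gradDot p P Q - pderiv 1 p * gradDot f P Q := by
  rw [hamiltonian_apply, gradDot, gradDot]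
  ring

theorem mul_hamiltonian_eq_snd (f p P Q : MvPolynomial (Fin 2) ℂ) :
    Q * hamiltonian f p = pderiv 0 p * gradDot f P Q - pderiv 0 f * gradDot p P Q := by
  rw [hamiltonian_apply, gradDot, gradDot]
  ring

theorem dvd_hamiltonian_of_dvd_gradDot {f p P Q : MvPolynomial (Fin 2) ℂ} (hPQ : IsRelPrime P Q)
    (hf : Prime f) (hfinv : f ∣ gradDot f P Q) (hp : f ∣ gradDot p P Q) :
    f ∣ hamiltonian f p := by
  by_contra hH
  have hP : f ∣ P := (hf.dvd_or_dvd (mul_hamiltonian_eq_fst f p P Q ▸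
    dvd_sub (dvd_mul_of_dvd_right hp _) (dvd_mul_of_dvd_right hfinv _))).resolve_right hH
  have hQ : f ∣ Q := (hf.dvd_or_dvd (mul_hamiltonian_eq_snd f p P Q ▸
    dvd_sub (dvd_mul_of_dvd_right hfinv _) (dvd_mul_of_dvd_right hp _))).resolve_right hH
  exact hf.not_isUnit (hPQ hP hQ)

theorem IsQH.constantCoeff_eq_zero {t₁ t₂ k : ℕ} {p : MvPolynomial (Fin 2) ℂ}
    (hp : IsQH t₁ t₂ k p) (hk : k ≠ 0) : constantCoeff p = 0 := by
  by_contra h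
  simpa [eq_comm, hk] using hp 0 (mem_support_iff.mpr h)

theorem invariant_curve_divides_of_divides_gradDot_general
    (t₁ t₂ : ℕ) (k : ℕ) (hk : 1 ≤ k)
    (P Q : MvPolynomial (Fin 2) ℂ)
    (hirrF : IsRelPrime P Q)
    (f : MvPolynomial (Fin 2) ℂ) (hfirr : Irreducible f)
    (hf0 : constantCoeff f = 0)
    (hinv : ∃ K : MvPolynomial (Fin 2) ℂ, gradDot f P Q = K * f)
    (p : MvPolynomial (Fin 2) ℂ) (hp : IsQH t₁ t₂ k p)
    (hdvd : f ∣ gradDot p P Q) :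
    f ∣ p := by
  have hf : Prime f := hfirr.prime
  obtain ⟨K, hK⟩ := hinv
  obtain ⟨c, hc⟩ := exists_dvd_sub_C_of_dvd_hamiltonian hf
    (dvd_hamiltonian_of_dvd_gradDot hirrF hf ⟨K, hK.trans (mul_comm K f)⟩ hdvd)
  have hc0 : c = 0 := by
    have := map_dvd constantCoeff hc
    rwa [hf0, zero_dvd_iff, map_sub, hp.constantCoeff_eq_zero (by omega), constantCoeff_C,
      zero_sub, neg_eq_zero] at this
  simpa [hc0] using hc

/-- If `F_n = (P,Q)` is an irreducible quasi-homogeneous vector field, `f` an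
irreducible invariant curve of `F_n`, and `f` divides `∇p·F_n` for a
quasi-homogeneous `p`, then `f` divides `p`. -/
theorem invariant_curve_divides_of_divides_gradDot
    (t₁ t₂ : ℕ) (ht₁ : 0 < t₁) (ht₂ : 0 < t₂) (n k : ℕ) (hk : 1 ≤ k)
    (P Q : MvPolynomial (Fin 2) ℂ)
    (hP : IsQH t₁ t₂ (n + t₁) P) (hQ : IsQH t₁ t₂ (n + t₂) Q)
    (hirrF : IsRelPrime P Q)
    (f : MvPolynomial (Fin 2) ℂ) (hfirr : Irreducible f)
    (hf0 : constantCoeff f = 0)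
    (hinv : ∃ K : MvPolynomial (Fin 2) ℂ, gradDot f P Q = K * f)
    (p : MvPolynomial (Fin 2) ℂ) (hp : IsQH t₁ t₂ k p)
    (hdvd : f ∣ gradDot p P Q) :
    f ∣ p :=
  invariant_curve_divides_of_divides_gradDot_general t₁ t₂ k hk P Q hirrF f hfirr hf0 hinv p hp hdvd
end

section
/- Let t₁, t₂ be positive integers, n ≥ 0, s ≥ 1, k ≥ 1 and m ≥ 1 integers. Let F_n = (P,Q) be a quasi-homogeneous polynomial vector field of type t = (t₁,t₂) and degree n over ℂ which is irreducible (P, Q have no nonconstant common factor). Let f be an irreducible quasi-homogeneous polynomial of type t and degree s which is an invariant curve of F_n with cofactor K_n (∇f·F_n = K_n·f, K_n quasi-homogeneous of degree n). Let p be quasi-homogeneous of type t and degree k. Suppose that for each j = 1, …, m−1 one has k ≠ j·s and the vector field F_n + (j/(k−j·s))·K_n·D₀ is irreducible. If f^m divides ∇p·F_n, then f^m divides p. -/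
/-!
Write `p = f^m q`. As `f` is invariant with cofactor `K`, `∇(f^m)·F = m K f^m`, so `f^(m+1) ∣ ∇p·F`
says `f ∣ ∇q·F + m K q`. Euler's identity `∇q·D₀ = (k - ms) q` turns this into `f ∣ ∇q·F_m` for the
perturbed field `F_m = F + (m/(k - ms)) K D₀`, along which `f` is still invariant. So everything
reduces to `m = 1` for an arbitrary field with coprime components: there `f` divides `J = ∇p × ∇f`
times both components of the field, hence `J` itself, and Euler's identities for `p` and `f` give
`k p ∂ᵢf ≡ 0 mod (f, J)`. If `f ∤ p` then `f ∣ ∂ᵢf`, so `∂ᵢf = 0` by comparing degrees, and then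
`s f = ∇f·D₀ = 0`.
-/

open MvPolynomial

namespace MvPolynomial

variable {σ R : Type*} [CommRing R] {f : MvPolynomial σ R} {i : σ}

theorem degreeOf_pderiv_lt (h : pderiv i f ≠ 0) : degreeOf i (pderiv i f) < degreeOf i f := by
  have hlt : ∀ m ∈ (pderiv i f).support, m i < degreeOf i f := fun m hm => by
    rw [mem_support_iff, coeff_pderiv] at hm
    simpa using monomial_le_degreeOf i (mem_support_iff.mpr (left_ne_zero_of_mul hm))
  obtain ⟨m, hm⟩ := support_nonempty.mpr h
  exact (degreeOf_lt_iff (Nat.zero_lt_of_lt (hlt m hm))).mpr hlt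

theorem pderiv_eq_zero_of_dvd_pderiv [IsDomain R] (h : f ∣ pderiv i f) : pderiv i f = 0 := by
  by_contra hne
  obtain ⟨g, hg⟩ := h
  have hf : f ≠ 0 := left_ne_zero_of_mul (hg ▸ hne)
  have hg0 : g ≠ 0 := right_ne_zero_of_mul (hg ▸ hne)
  have := degreeOf_pderiv_lt hne
  rw [hg, degreeOf_mul_eq hf hg0] at this
  omega

end MvPolynomial

section IsQH

variable {t₁ t₂ k : ℕ} {p : MvPolynomial (Fin 2) ℂ}

theorem IsQH.isWeightedHomogeneous (hp : IsQH t₁ t₂ k p) :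
    p.IsWeightedHomogeneous ![t₁, t₂] k := fun d hd => by
  simpa [Finsupp.weight_apply, Finsupp.sum_fintype, Fin.sum_univ_two, mul_comm]
    using hp d (mem_support_iff.mpr hd)

theorem IsQH.gradDot_euler (hp : IsQH t₁ t₂ k p) :
    gradDot p (C (t₁ : ℂ) * X 0) (C (t₂ : ℂ) * X 1) = C (k : ℂ) * p := by
  have h := hp.isWeightedHomogeneous.sum_weight_X_mul_pderiv
  simp only [Fin.sum_univ_two, nsmul_eq_mul, Matrix.cons_val_zero, Matrix.cons_val_one] at h
  simp only [gradDot, map_natCast]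
  linear_combination h

end IsQH

section gradDot

noncomputable def jacobian (p f : MvPolynomial (Fin 2) ℂ) : MvPolynomial (Fin 2) ℂ :=
  pderiv 0 p * pderiv 1 f - pderiv 1 p * pderiv 0 f

variable {f g p q P Q U V K L a : MvPolynomial (Fin 2) ℂ}

theorem gradDot_add_mul_field :
    gradDot f (P + a * U) (Q + a * V) = gradDot f P Q + a * gradDot f U V := by
  simp only [gradDot]; ring

theorem gradDot_mul : gradDot (f * g) P Q = f * gradDot g P Q + g * gradDot f P Q := by
  simp only [gradDot, Derivation.leibniz, smul_eq_mul]; ring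

theorem gradDot_pow_of_eq_mul (hf : gradDot f P Q = K * f) (m : ℕ) :
    gradDot (f ^ m) P Q = m * K * f ^ m := by
  induction m with
  | zero => simp [gradDot]
  | succ m ih => rw [pow_succ, gradDot_mul, ih, hf]; push_cast; ring

theorem gradDot_eq_of_gradDot_mul (hg0 : g ≠ 0) (hg : gradDot g P Q = K * g)
    (hgq : gradDot (g * q) P Q = L * (g * q)) : gradDot q P Q = (L - K) * q := by
  refine mul_left_cancel₀ hg0 ?_
  linear_combination hgq - gradDot_mul (f := g) (g := q) - q * hg

theorem dvd_jacobian_of_dvd_gradDot (hf : Prime f) (hPQ : IsRelPrime P Q)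
    (hf_inv : f ∣ gradDot f P Q) (hp : f ∣ gradDot p P Q) :
    f ∣ jacobian p f := by
  have hJP : jacobian p f * P = pderiv 1 f * gradDot p P Q - pderiv 1 p * gradDot f P Q := by
    simp only [jacobian, gradDot]; ring
  have hJQ : jacobian p f * Q = pderiv 0 p * gradDot f P Q - pderiv 0 f * gradDot p P Q := by
    simp only [jacobian, gradDot]; ring
  have hdvdP : f ∣ jacobian p f * P := hJP ▸ dvd_sub (hp.mul_left _) (hf_inv.mul_left _)
  have hdvdQ : f ∣ jacobian p f * Q := hJQ ▸ dvd_sub (hf_inv.mul_left _) (hp.mul_left _)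
  rcases hf.dvd_or_dvd hdvdP with hJ | hfP
  · exact hJ
  rcases hf.dvd_or_dvd hdvdQ with hJ | hfQ
  · exact hJ
  exact absurd (hPQ hfP hfQ) hf.not_isUnit

variable {s c : ℂ}

theorem dvd_mul_pderiv_of_dvd_jacobian (hc : c ≠ 0)
    (hfE : gradDot f U V = C s * f) (hpE : gradDot p U V = C c * p)
    (hJ : f ∣ jacobian p f) (i : Fin 2) :
    f ∣ p * pderiv i f := by
  suffices f ∣ C c * (p * pderiv i f) from (hc.isUnit.map C).dvd_mul_left.mp this
  fin_cases i
  · have key : C c * (p * pderiv 0 f) = C s * pderiv 0 p * f - V * jacobian p f := by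
      simp only [gradDot, jacobian] at hfE hpE ⊢
      linear_combination pderiv 0 p * hfE - pderiv 0 f * hpE
    exact key ▸ dvd_sub (dvd_mul_left f _) (hJ.mul_left V)
  · have key : C c * (p * pderiv 1 f) = C s * pderiv 1 p * f + U * jacobian p f := by
      simp only [gradDot, jacobian] at hfE hpE ⊢
      linear_combination pderiv 1 p * hfE - pderiv 1 f * hpE
    exact key ▸ dvd_add (dvd_mul_left f _) (hJ.mul_left U)

theorem dvd_of_dvd_gradDot (hs : s ≠ 0) (hc : c ≠ 0) (hf : Prime f) (hPQ : IsRelPrime P Q)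
    (hfE : gradDot f U V = C s * f) (hpE : gradDot p U V = C c * p)
    (hf_inv : f ∣ gradDot f P Q) (hp : f ∣ gradDot p P Q) : f ∣ p := by
  by_contra hfp
  have hJ := dvd_jacobian_of_dvd_gradDot hf hPQ hf_inv hp
  have hpderiv (i : Fin 2) : pderiv i f = 0 :=
    pderiv_eq_zero_of_dvd_pderiv <| (hf.dvd_or_dvd <|
      dvd_mul_pderiv_of_dvd_jacobian hc hfE hpE hJ i).resolve_left hfp
  have hsf : C s * f = 0 := by rw [← hfE, gradDot, hpderiv, hpderiv]; ring
  exact hf.ne_zero ((mul_eq_zero.mp hsf).resolve_left (C_ne_zero.mpr hs))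

theorem pow_succ_dvd_of_pow_dvd {k : ℂ} {m : ℕ} (hs : s ≠ 0) (hf : Prime f)
    (hfK : gradDot f P Q = K * f) (hfE : gradDot f U V = C s * f)
    (hpE : gradDot p U V = C k * p) (hk : k ≠ m * s)
    (hPQ : IsRelPrime (P + C (m / (k - m * s)) * K * U) (Q + C (m / (k - m * s)) * K * V))
    (hpm : f ^ m ∣ p) (hdvd : f ^ (m + 1) ∣ gradDot p P Q) : f ^ (m + 1) ∣ p := by
  obtain ⟨q, rfl⟩ := hpm
  set a := C ((m : ℂ) / (k - m * s)) * K
  have hc : k - m * s ≠ 0 := sub_ne_zero.mpr hk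
  have hfm : f ^ m ≠ 0 := pow_ne_zero m hf.ne_zero
  have hqE : gradDot q U V = C (k - m * s) * q := by
    rw [map_sub, map_mul, map_natCast]
    exact gradDot_eq_of_gradDot_mul hfm (gradDot_pow_of_eq_mul hfE m) hpE
  have hq : f ∣ gradDot q P Q + m * K * q := by
    rw [gradDot_mul, gradDot_pow_of_eq_mul hfK, pow_succ] at hdvd
    exact (mul_dvd_mul_iff_left hfm).mp (by convert hdvd using 1; ring)
  have ha : a * C (k - m * s) = (m : MvPolynomial (Fin 2) ℂ) * K := by
    rw [mul_right_comm, ← map_mul, div_mul_cancel₀ _ hc, map_natCast]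
  have hqF : gradDot q (P + a * U) (Q + a * V) = gradDot q P Q + m * K * q := by
    rw [gradDot_add_mul_field, hqE]; linear_combination q * ha
  have hfF : gradDot f (P + a * U) (Q + a * V) = (K + a * C s) * f := by
    rw [gradDot_add_mul_field, hfE, hfK]; ring
  have hfq : f ∣ q :=
    dvd_of_dvd_gradDot hs hc hf hPQ hfE hqE (hfF ▸ dvd_mul_left f _) (hqF ▸ hq)
  rw [pow_succ]
  exact mul_dvd_mul_left _ hfq

theorem pow_dvd_of_pow_dvd_gradDot {k : ℂ} {m : ℕ} (hs : s ≠ 0) (hf : Prime f)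
    (hfK : gradDot f P Q = K * f) (hfE : gradDot f U V = C s * f)
    (hpE : gradDot p U V = C k * p)
    (hj : ∀ j < m, k ≠ j * s ∧
      IsRelPrime (P + C (j / (k - j * s)) * K * U) (Q + C (j / (k - j * s)) * K * V))
    (hdvd : f ^ m ∣ gradDot p P Q) : f ^ m ∣ p := by
  induction m with
  | zero => exact one_dvd p
  | succ m ih =>
    obtain ⟨hk, hPQ⟩ := hj m m.lt_succ_self
    have hpm := ih (fun j hjm => hj j (by omega)) ((pow_dvd_pow f m.le_succ).trans hdvd)
    exact pow_succ_dvd_of_pow_dvd hs hf hfK hfE hpE hk hPQ hpm hdvd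

end gradDot

theorem power_invariant_curve_divides_of_divides_gradDot_general
    (t₁ t₂ : ℕ) (s k m : ℕ)
    (hs : 1 ≤ s) (hk : 1 ≤ k)
    (P Q : MvPolynomial (Fin 2) ℂ)
    (hirrF : IsRelPrime P Q)
    (f : MvPolynomial (Fin 2) ℂ) (hfirr : Irreducible f)
    (hfQH : IsQH t₁ t₂ s f)
    (Kn : MvPolynomial (Fin 2) ℂ)
    (hinv : gradDot f P Q = Kn * f)
    (hirrj : ∀ j : ℕ, 1 ≤ j → j ≤ m - 1 →
      k ≠ j * s ∧
      IsRelPrime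
        (P + C ((j : ℂ) / ((k : ℂ) - (j : ℂ) * (s : ℂ))) * Kn * (C (t₁ : ℂ) * X 0))
        (Q + C ((j : ℂ) / ((k : ℂ) - (j : ℂ) * (s : ℂ))) * Kn * (C (t₂ : ℂ) * X 1)))
    (p : MvPolynomial (Fin 2) ℂ) (hp : IsQH t₁ t₂ k p)
    (hdvd : f ^ m ∣ gradDot p P Q) :
    f ^ m ∣ p := by
  refine pow_dvd_of_pow_dvd_gradDot (Nat.cast_ne_zero.mpr (by omega)) hfirr.prime hinv
    hfQH.gradDot_euler hp.gradDot_euler (fun j hjm => ?_) hdvd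
  rcases Nat.eq_zero_or_pos j with rfl | hj
  · simpa [Nat.one_le_iff_ne_zero.mp hk] using hirrF
  · obtain ⟨hne, hrel⟩ := hirrj j hj (by omega)
    exact ⟨by exact_mod_cast hne, hrel⟩

/-- If `F_n = (P,Q)` is an irreducible quasi-homogeneous vector field, `f` an
irreducible quasi-homogeneous invariant curve of `F_n` with cofactor `K_n`,
`p` quasi-homogeneous of degree `k`, and for each `j = 1,…,m−1` the vector
field `F_n + (j/(k−js))·K_n·D₀` is irreducible (with `k ≠ js`), then
`f^m ∣ ∇p·F_n` implies `f^m ∣ p`. -/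
theorem power_invariant_curve_divides_of_divides_gradDot
    (t₁ t₂ : ℕ) (ht₁ : 0 < t₁) (ht₂ : 0 < t₂) (n s k m : ℕ)
    (hs : 1 ≤ s) (hk : 1 ≤ k) (hm : 1 ≤ m)
    (P Q : MvPolynomial (Fin 2) ℂ)
    (hP : IsQH t₁ t₂ (n + t₁) P) (hQ : IsQH t₁ t₂ (n + t₂) Q)
    (hirrF : IsRelPrime P Q)
    (f : MvPolynomial (Fin 2) ℂ) (hfirr : Irreducible f)
    (hfQH : IsQH t₁ t₂ s f) (hf0 : constantCoeff f = 0)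
    (Kn : MvPolynomial (Fin 2) ℂ) (hKn : IsQH t₁ t₂ n Kn)
    (hinv : gradDot f P Q = Kn * f)
    (hirrj : ∀ j : ℕ, 1 ≤ j → j ≤ m - 1 →
      k ≠ j * s ∧
      IsRelPrime
        (P + C ((j : ℂ) / ((k : ℂ) - (j : ℂ) * (s : ℂ))) * Kn * (C (t₁ : ℂ) * X 0))
        (Q + C ((j : ℂ) / ((k : ℂ) - (j : ℂ) * (s : ℂ))) * Kn * (C (t₂ : ℂ) * X 1)))
    (p : MvPolynomial (Fin 2) ℂ) (hp : IsQH t₁ t₂ k p)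
    (hdvd : f ^ m ∣ gradDot p P Q) :
    f ^ m ∣ p :=
  power_invariant_curve_divides_of_divides_gradDot_general t₁ t₂ s k m hs hk P Q hirrF f hfirr hfQH
    Kn hinv hirrj p hp hdvd
end
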